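/- arXiv:math/0010255 — 5 statements merged into one kernel-verified Lean document; each statement's English description precedes it below -/
import Mathlib

section
/- The octonions are alternative: for all a, b ∈ 𝕆, (b·a)·a = b·(a·a) and (b·a)·conj(a) = b·(a·conj(a)); equivalently, the associators [b, a, a] and [b, a, conj(a)] vanish. -/
noncomputable section

open Quaternion

/-- The octonions, realized as the Cayley–Dickson double of the real quaternions:
pairs of quaternions. -/
abbrev 𝕆 : Type := ℍ[ℝ] × ℍ[ℝ]

namespace Octonion

/-- Cayley–Dickson multiplication: `(a, b)·(c, d) = (a·c − conj(d)·b, d·a + b·conj(c))`. -/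
def omul (x y : 𝕆) : 𝕆 :=
  (x.1 * y.1 - star y.2 * x.2, y.2 * x.1 + x.2 * star y.1)

/-- Octonionic conjugation: `conj (a, b) = (conj a, −b)`. -/
def oconj (x : 𝕆) : 𝕆 := (star x.1, -x.2)

/-- The embedding of the reals, `r ↦ (r, 0)`. -/
def oR (r : ℝ) : 𝕆 := ((r : ℍ[ℝ]), 0)

/-- The unit octonion `1 = (1, 0)`. -/
def o1 : 𝕆 := oR 1

/-- The associator `[a,b,c] = (a·b)·c − a·(b·c)`. -/
def oassoc (a b c : 𝕆) : 𝕆 := omul (omul a b) c - omul a (omul b c)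

/-- The inner product: the real number with `(a·conj b + b·conj a)/2 = (a ⋅ b)·1`. -/
def odot (x y : 𝕆) : ℝ := (omul x (oconj y) + omul y (oconj x)).1.re / 2

/-- The squared norm `|x|²`, the real number with `x·conj x = |x|²·1`. -/
def onormSq (x : 𝕆) : ℝ := odot x x

/-- The real part of an octonion, as a real number. -/
def oreR (x : 𝕆) : ℝ := x.1.re

/-- The imaginary part `Im(x) = (x − conj x)/2`. -/
def oIm (x : 𝕆) : 𝕆 := (2:ℝ)⁻¹ • (x - oconj x)

/-- The imaginary units. -/
def oi : 𝕆 := (⟨0,1,0,0⟩, 0)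
def oj : 𝕆 := (⟨0,0,1,0⟩, 0)
def ok : 𝕆 := (⟨0,0,0,1⟩, 0)
def ol : 𝕆 := (0, 1)
def oil : 𝕆 := (0, ⟨0,1,0,0⟩)
def ojl : 𝕆 := (0, ⟨0,0,1,0⟩)
def okl : 𝕆 := (0, ⟨0,0,0,1⟩)

end Octonion


open Octonion

set_option maxHeartbeats 4000000 in
/-- The octonions are alternative: `[b,a,a] = 0 = [b,a,conj a]`, i.e.
`(b·a)·a = b·(a·a)` and `(b·a)·conj(a) = b·(a·conj(a))`. -/
theorem octonion_alternative (a b : 𝕆) :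
    omul (omul b a) a = omul b (omul a a) ∧
      omul (omul b a) (oconj a) = omul b (omul a (oconj a)) ∧
      oassoc b a a = 0 ∧ oassoc b a (oconj a) = 0 := by
  obtain ⟨a1, a2⟩ := a
  obtain ⟨b1, b2⟩ := b
  refine ⟨?_, ?_, ?_, ?_⟩ <;>
    simp only [oassoc, omul, oconj, Prod.mk.injEq, Prod.ext_iff, Prod.fst_sub, Prod.snd_sub,
      Prod.fst_zero, Prod.snd_zero, sub_eq_zero] <;>
    constructor <;>
    ext <;>
    simp [Quaternion.ext_iff, Quaternion.re_mul, Quaternion.imI_mul, Quaternion.imJ_mul,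
      Quaternion.imK_mul, Quaternion.re_star, Quaternion.imI_star, Quaternion.imJ_star,
      Quaternion.imK_star] <;>
    ring
end
end

section
/- For all octonions a, b, x: a ⋅ (x·b) = b ⋅ (conj(x)·a). -/
noncomputable section

open Quaternion

/- Both sides expand into real parts of triple products of quaternions, which match in pairs
since `re` is invariant under cyclic permutations and under `star`. -/

namespace Quaternion

variable {R : Type*} [CommRing R]

theorem re_mul_comm (p q : ℍ[R]) : (p * q).re = (q * p).re := by
  simp only [re_mul]; ring

theorem re_mul_mul_comm (p q r : ℍ[R]) : (p * (q * r)).re = (q * (r * p)).re := by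
  rw [re_mul_comm, mul_assoc]

theorem re_mul_star_comm (p q : ℍ[R]) : (p * star q).re = (q * star p).re := by
  rw [← re_star, star_mul, star_star]

end Quaternion

namespace Octonion

theorem odot_eq_re_add_re (x y : 𝕆) : odot x y = (x.1 * star y.1).re + (x.2 * star y.2).re := by
  simp only [odot, omul, oconj, Prod.fst_add, star_neg, star_star, neg_mul, sub_neg_eq_add,
    Quaternion.re_add]
  rw [Quaternion.re_mul_star_comm y.1, Quaternion.re_mul_comm (star y.2),
    Quaternion.re_mul_comm (star x.2), Quaternion.re_mul_star_comm y.2]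
  ring

end Octonion

open Octonion Quaternion

/-- For all octonions `a, b, x`: `a ⋅ (x·b) = b ⋅ (conj(x)·a)`. -/
theorem dot_identity (a b x : 𝕆) :
    odot a (omul x b) = odot b (omul (oconj x) a) := by
  obtain ⟨a₁, a₂⟩ := a
  obtain ⟨b₁, b₂⟩ := b
  obtain ⟨x₁, x₂⟩ := x
  simp only [odot_eq_re_add_re, omul, oconj, star_sub, star_add, star_mul, star_star, star_neg,
    mul_sub, mul_add, mul_neg, neg_mul, re_add, re_sub, re_neg, sub_neg_eq_add]
  have h₁₁ : (a₁ * (star b₁ * star x₁)).re = (b₁ * (star a₁ * x₁)).re := by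
    rw [← re_star]; simp only [star_mul, star_star, mul_assoc]; exact re_mul_mul_comm _ _ _
  have h₁₂ : (a₁ * (star x₂ * b₂)).re = (b₂ * (a₁ * star x₂)).re := by
    rw [re_mul_mul_comm, re_mul_mul_comm]
  have h₂₁ : (a₂ * (star x₁ * star b₂)).re = (b₂ * (x₁ * star a₂)).re := by
    rw [← re_star]; simp only [star_mul, star_star, mul_assoc]
  have h₂₂ : (a₂ * (b₁ * star x₂)).re = (b₁ * (star x₂ * a₂)).re := re_mul_mul_comm _ _ _
  rw [h₁₁, h₁₂, h₂₁, h₂₂]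
  ring
end
end

section
/- Let p, m ∈ ℝ and a, b, c, x, y, z, λ ∈ 𝕆 satisfy the first two components of the right eigenvalue equation: a·y + conj(b)·z = x·(λ − p) and c·z + conj(a)·x = y·(λ − m). Then [a, y, λ] = x·((λ − p)·(λ − m) − |a|²) − (conj(b)·z)·(λ − m) − a·(c·z). -/
noncomputable section

open Quaternion

open Octonion

/-! Real octonions lie in the nucleus, so `[a, y, λ] = [a, y, λ − m]`, which the second equation
turns into `(a·y)·(λ − m) − a·(c·z) − a·(conj a·x)`. Substituting `a·y` from the first equation, the
remaining terms are handled by the alternative laws: `[x, λ − p, λ − m] = [x, λ, λ] = 0`, and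
`a·(conj a·x) = |a|²·x`. -/

namespace Octonion

lemma omul_sub_left (u v w : 𝕆) : omul (u - v) w = omul u w - omul v w := by
  ext <;> simp only [omul, Prod.fst_sub, Prod.snd_sub] <;> noncomm_ring

lemma omul_add_right (u v w : 𝕆) : omul u (v + w) = omul u v + omul u w := by
  ext <;> simp only [omul, Prod.fst_add, Prod.snd_add, star_add] <;> noncomm_ring

lemma omul_sub_right (u v w : 𝕆) : omul u (v - w) = omul u v - omul u w := by
  ext <;> simp only [omul, Prod.fst_sub, Prod.snd_sub, star_sub] <;> noncomm_ring

lemma omul_oR (x : 𝕆) (r : ℝ) : omul x (oR r) = r • x := by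
  ext <;> simp [omul, oR, Quaternion.mul_coe_eq_smul]

lemma oassoc_self_right (x l : 𝕆) : oassoc x l l = 0 := by
  simp only [oassoc, omul, Prod.ext_iff, Quaternion.ext_iff]
  simp only [star_add, star_mul, star_star, star_sub, Prod.mk_sub_mk, re_sub, re_mul, re_star,
    imI_star, neg_mul, sub_neg_eq_add, imJ_star, imK_star, imI_sub, imI_mul, imJ_sub, imJ_mul,
    imK_sub, imK_mul, re_add, mul_neg, imI_add, imJ_add, imK_add, neg_neg, sub_add_add_cancel,
    Prod.fst_zero, re_zero, imI_zero, imJ_zero, imK_zero, Prod.snd_zero]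
  refine ⟨⟨?_, ?_, ?_, ?_⟩, ⟨?_, ?_, ?_, ?_⟩⟩ <;> ring

lemma oassoc_sub_oR_right (a b c : 𝕆) (r : ℝ) : oassoc a b (c - oR r) = oassoc a b c := by
  simp only [oassoc, omul, oR, Prod.ext_iff, Quaternion.ext_iff]
  simp only [Prod.fst_sub, Prod.snd_sub, sub_zero, star_sub, star_coe, star_add, star_mul,
    star_star, Prod.mk_sub_mk, re_sub, re_mul, re_star, imI_star, neg_mul, sub_neg_eq_add,
    imJ_star, imK_star, re_coe, imI_sub, imI_mul, imI_coe, imJ_sub, imJ_mul, imJ_coe, imK_sub,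
    imK_mul, imK_coe, re_add, mul_neg, imI_add, imJ_add, imK_add, neg_neg]
  refine ⟨⟨?_, ?_, ?_, ?_⟩, ⟨?_, ?_, ?_, ?_⟩⟩ <;> ring

lemma oassoc_sub_oR_middle (a b c : 𝕆) (r : ℝ) : oassoc a (b - oR r) c = oassoc a b c := by
  simp only [oassoc, omul, oR, Prod.ext_iff, Quaternion.ext_iff]
  simp only [Prod.fst_sub, Prod.snd_sub, sub_zero, star_sub, star_coe, star_add, star_mul,
    star_star, Prod.mk_sub_mk, re_sub, re_mul, re_coe, imI_sub, imI_coe, imJ_sub, imJ_coe,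
    imK_sub, imK_coe, re_star, imI_star, neg_mul, sub_neg_eq_add, imJ_star, imK_star, imI_mul,
    imJ_mul, imK_mul, re_add, mul_neg, imI_add, imJ_add, imK_add, neg_neg]
  refine ⟨⟨?_, ?_, ?_, ?_⟩, ⟨?_, ?_, ?_, ?_⟩⟩ <;> ring

lemma omul_omul_oconj_left (a x : 𝕆) : omul a (omul (oconj a) x) = onormSq a • x := by
  simp only [omul, oconj, onormSq, odot, Prod.ext_iff, Quaternion.ext_iff]
  simp only [mul_neg, sub_neg_eq_add, neg_mul, star_add, star_mul, star_star, star_neg, re_sub,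
    re_mul, re_add, re_star, imI_star, imJ_star, imK_star, imI_add, imI_mul, imJ_add, imJ_mul,
    imK_add, imK_mul, re_neg, neg_add_rev, imI_neg, neg_neg, imJ_neg, imK_neg, neg_add_cancel,
    Prod.mk_add_mk, add_zero, add_self_div_two, Prod.smul_fst, re_smul, smul_eq_mul, imI_sub,
    imI_smul, imJ_sub, imJ_smul, imK_sub, imK_smul, Prod.smul_snd]
  refine ⟨⟨?_, ?_, ?_, ?_⟩, ⟨?_, ?_, ?_, ?_⟩⟩ <;> ring

end Octonion

/-- If `a·y + conj(b)·z = x·(λ−p)` and `c·z + conj(a)·x = y·(λ−m)`, then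
`[a,y,λ] = x·((λ−p)·(λ−m) − |a|²) − (conj(b)·z)·(λ−m) − a·(c·z)`. -/
theorem assoc_a_y_lam (p m : ℝ) (a b c x y z lam : 𝕆)
    (h1 : omul a y + omul (oconj b) z = omul x (lam - oR p))
    (h2 : omul c z + omul (oconj a) x = omul y (lam - oR m)) :
    oassoc a y lam =
      omul x (omul (lam - oR p) (lam - oR m) - oR (onormSq a))
        - omul (omul (oconj b) z) (lam - oR m) - omul a (omul c z) := by
  have hay : omul a y = omul x (lam - oR p) - omul (oconj b) z := eq_sub_of_add_eq h1
  have hx : omul (omul x (lam - oR p)) (lam - oR m) = omul x (omul (lam - oR p) (lam - oR m)) :=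
    sub_eq_zero.mp <| by
      rw [← oassoc, oassoc_sub_oR_right, oassoc_sub_oR_middle, oassoc_self_right]
  rw [← oassoc_sub_oR_right a y lam m, oassoc, hay, ← h2, omul_sub_left, omul_add_right, hx,
    omul_omul_oconj_left, omul_sub_right x _ (oR _), omul_oR x]
  abel
end
end

section
/- For every n, every vector v : Fin n → 𝕆 with ∑ⱼ conj(vⱼ)·vⱼ = 1, every λ ∈ 𝕆, and every index i: ∑ⱼ ((vᵢ·λ)·conj(vⱼ))·vⱼ = vᵢ·λ. (That is, ((v·λ)·v†)·v = v·λ for any normalized octonionic vector v and arbitrary octonion λ.) -/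
noncomputable section

open Quaternion

open Octonion

namespace Octonion

theorem omul_add (x y z : 𝕆) : omul x (y + z) = omul x y + omul x z := by
  simp only [omul, Prod.fst_add, Prod.snd_add, star_add, Prod.mk_add_mk, Prod.ext_iff]
  constructor <;> noncomm_ring

def omulLeft (x : 𝕆) : 𝕆 →+ 𝕆 where
  toFun := omul x
  map_zero' := by simp [omul]
  map_add' := omul_add x

theorem omul_sum {ι : Type*} (s : Finset ι) (x : 𝕆) (f : ι → 𝕆) :
    omul x (∑ j ∈ s, f j) = ∑ j ∈ s, omul x (f j) :=
  map_sum (omulLeft x) f s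

theorem omul_o1 (x : 𝕆) : omul x o1 = x := by
  simp [omul, o1, oR]

/-- An instance of alternativity: `oconj a = 2 Re a - a` and `a` generate an associative
subalgebra. -/
theorem omul_oconj_omul_assoc (x a : 𝕆) :
    omul (omul x (oconj a)) a = omul x (omul (oconj a) a) := by
  simp only [omul, oconj, Prod.ext_iff, Quaternion.ext_iff, Quaternion.re_mul,
    Quaternion.imI_mul, Quaternion.imJ_mul, Quaternion.imK_mul, Quaternion.re_star,
    Quaternion.imI_star, Quaternion.imJ_star, Quaternion.imK_star, Quaternion.re_sub,
    Quaternion.imI_sub, Quaternion.imJ_sub, Quaternion.imK_sub, Quaternion.re_add,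
    Quaternion.imI_add, Quaternion.imJ_add, Quaternion.imK_add, Quaternion.re_neg,
    Quaternion.imI_neg, Quaternion.imJ_neg, Quaternion.imK_neg]
  refine ⟨⟨?_, ?_, ?_, ?_⟩, ?_, ?_, ?_, ?_⟩ <;> ring

end Octonion

/-- `((v·λ)·v†)·v = v·λ` for any normalized octonionic vector `v` and
arbitrary octonion `λ`: for every index `i`,
`∑ⱼ ((vᵢ·λ)·conj(vⱼ))·vⱼ = vᵢ·λ`. -/
theorem outer_product_identity (n : ℕ) (v : Fin n → 𝕆)
    (hnorm : ∑ j, omul (oconj (v j)) (v j) = o1) (lam : 𝕆) (i : Fin n) :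
    ∑ j, omul (omul (omul (v i) lam) (oconj (v j))) (v j) = omul (v i) lam := by
  calc ∑ j, omul (omul (omul (v i) lam) (oconj (v j))) (v j)
      = ∑ j, omul (omul (v i) lam) (omul (oconj (v j)) (v j)) := by
        simp only [omul_oconj_omul_assoc]
    _ = omul (omul (v i) lam) (∑ j, omul (oconj (v j)) (v j)) := (omul_sum _ _ _).symm
    _ = omul (v i) lam := by rw [hnorm, omul_o1]
end
end

section
/- Let p, q ∈ ℝ, a := q·i, b := q·(j − iℓ − jℓ), c := q·(1 + k + ℓ), and let C be the 3×3 octonionic Hermitian matrix with rows (p, a, conj b), (conj a, p, c), (b, conj c, p). Then v = (j, ℓ, 0) is a right eigenvector of C with non-real eigenvalue λ = p + q·(ℓ·k) = p − q·kℓ, i.e. C·v = v·λ. Moreover the associator of the off-diagonal entries is [a, b, c] = 2q³·(ℓ − k); in particular, when q ≠ 0, the imaginary part Im(λ) = −q·kℓ is not a real multiple of [a, b, c]. -/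
/-!
Everything is a finite computation in Cayley–Dickson coordinates. Real scalars are central, so
the associator is real-trilinear and `[a, b, c] = q³ [i, j − iℓ − jℓ, 1 + k + ℓ] = 2q³ (ℓ − k)`;
`ℓk = −kℓ` gives the second form of `λ`. Finally `Im λ = −q kℓ` has a nonzero `kℓ`-coordinate,
while `[a, b, c]` lies in the span of `ℓ` and `k`.
-/

noncomputable section

open Quaternion

open Octonion

/-- The action of a `3×3` octonionic matrix on a column vector:
`(B·v)ₐ = ∑ᵦ Bₐᵦ·vᵦ`. -/
def mvec (B : Fin 3 → Fin 3 → 𝕆) (u : Fin 3 → 𝕆) : Fin 3 → 𝕆 :=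
  fun α => ∑ β, omul (B α β) (u β)


namespace Octonion

theorem ext_components {x y : 𝕆} (h1 : x.1.re = y.1.re) (h2 : x.1.imI = y.1.imI)
    (h3 : x.1.imJ = y.1.imJ) (h4 : x.1.imK = y.1.imK) (h5 : x.2.re = y.2.re)
    (h6 : x.2.imI = y.2.imI) (h7 : x.2.imJ = y.2.imJ) (h8 : x.2.imK = y.2.imK) : x = y :=
  Prod.ext (QuaternionAlgebra.ext h1 h2 h3 h4) (QuaternionAlgebra.ext h5 h6 h7 h8)

/- A literal `⟨x, y, z, w⟩ : ℍ[ℝ]`, as in the definitions of the units, is elaborated at the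
unfolded type `ℍ[ℝ,-1,0,-1]`, where the `Quaternion` simp lemmas do not fire. This rewrite
restores the type `ℍ[ℝ]`; `Quaternion.equivTuple_symm_apply` would undo it. -/
attribute [-simp] Quaternion.equivTuple_symm_apply

@[simp] theorem mk_eq_equivTuple_symm (x y z w : ℝ) :
    (⟨x, y, z, w⟩ : ℍ[ℝ]) = (Quaternion.equivTuple ℝ).symm ![x, y, z, w] :=
  rfl

section equivTuple

variable (x y z w : ℝ)

@[simp] theorem re_equivTuple_symm : ((Quaternion.equivTuple ℝ).symm ![x, y, z, w]).re = x := rfl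
@[simp] theorem imI_equivTuple_symm : ((Quaternion.equivTuple ℝ).symm ![x, y, z, w]).imI = y := rfl
@[simp] theorem imJ_equivTuple_symm : ((Quaternion.equivTuple ℝ).symm ![x, y, z, w]).imJ = z := rfl
@[simp] theorem imK_equivTuple_symm : ((Quaternion.equivTuple ℝ).symm ![x, y, z, w]).imK = w := rfl

end equivTuple

theorem omul_smul_left (r : ℝ) (x y : 𝕆) : omul (r • x) y = r • omul x y := by
  simp only [omul, Prod.smul_fst, Prod.smul_snd, Prod.smul_mk, smul_sub, smul_add, mul_smul_comm,
    smul_mul_assoc]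

theorem omul_smul_right (r : ℝ) (x y : 𝕆) : omul x (r • y) = r • omul x y := by
  simp only [omul, Prod.smul_fst, Prod.smul_snd, Prod.smul_mk, smul_sub, smul_add, mul_smul_comm,
    smul_mul_assoc, Quaternion.star_smul]

theorem oassoc_smul (r s t : ℝ) (x y z : 𝕆) :
    oassoc (r • x) (s • y) (t • z) = (r * s * t) • oassoc x y z := by
  simp only [oassoc, omul_smul_left, omul_smul_right, smul_smul, smul_sub]
  ring_nf

theorem omul_ol_ok : omul ol ok = -okl := by
  apply ext_components <;> simp [omul, ol, ok, okl]

theorem oassoc_oi_oj_sub_oil_sub_ojl_o1_add_ok_add_ol :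
    oassoc oi (oj - oil - ojl) (o1 + ok + ol) = (2 : ℝ) • (ol - ok) := by
  apply ext_components <;>
    simp [oassoc, omul, oi, oj, ok, ol, oil, ojl, o1, oR] <;> norm_num

theorem oIm_oR_sub_smul_okl (p q : ℝ) : oIm (oR p - q • okl) = -(q • okl) := by
  apply ext_components <;> simp [oIm, oconj, oR, okl]
  ring

theorem neg_smul_okl_ne_smul_ol_sub_ok {q : ℝ} (hq : q ≠ 0) (r : ℝ) :
    -(q • okl) ≠ r • (ol - ok) := by
  intro h
  have := congrArg (fun x : 𝕆 => x.2.imK) h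
  simp [okl, ol, ok] at this
  exact hq this

theorem mvec_example3 (p q : ℝ) :
    mvec ![![oR p, q • oi, oconj (q • (oj - oil - ojl))],
        ![oconj (q • oi), oR p, q • (o1 + ok + ol)],
        ![q • (oj - oil - ojl), oconj (q • (o1 + ok + ol)), oR p]] ![oj, ol, 0]
      = fun α => omul (![oj, ol, 0] α) (oR p + q • omul ol ok) := by
  funext α
  fin_cases α <;> apply ext_components <;>
    simp [mvec, Fin.sum_univ_three, omul, oconj, oR, o1, oi, oj, ok, ol, oil, ojl]

end Octonion

/-- Example 3: the matrix `C` with `a = qi`, `b = q(j − iℓ − jℓ)`,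
`c = q(1 + k + ℓ)` admits the right eigenvector `v = (j, ℓ, 0)` with non-real
eigenvalue `λ = p + q·(ℓk) = p − q·kℓ`; the associator of the off-diagonal
entries is `[a,b,c] = 2q³(ℓ − k)`, and for `q ≠ 0` the imaginary part
`Im(λ) = −q·kℓ` is not a real multiple of `[a,b,c]`. -/
theorem example3 (p q : ℝ) (a b c : 𝕆)
    (ha : a = q • oi) (hb : b = q • (oj - oil - ojl)) (hc : c = q • (o1 + ok + ol)) :
    mvec ![![oR p, a, oconj b], ![oconj a, oR p, c], ![b, oconj c, oR p]] ![oj, ol, 0]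
        = (fun α => omul (![oj, ol, 0] α) (oR p + q • omul ol ok))
    ∧ oR p + q • omul ol ok = oR p - q • okl
    ∧ oassoc a b c = (2 * q^3) • (ol - ok)
    ∧ oIm (oR p + q • omul ol ok) = -(q • okl)
    ∧ (q ≠ 0 → ∀ r : ℝ, oIm (oR p + q • omul ol ok) ≠ r • oassoc a b c) := by
  subst ha hb hc
  have heigen : oR p + q • omul ol ok = oR p - q • okl := by
    rw [omul_ol_ok, smul_neg, sub_eq_add_neg]
  have hassoc : oassoc (q • oi) (q • (oj - oil - ojl)) (q • (o1 + ok + ol))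
      = (2 * q ^ 3) • (ol - ok) := by
    rw [oassoc_smul, oassoc_oi_oj_sub_oil_sub_ojl_o1_add_ok_add_ol, smul_smul]
    congr 1
    ring
  have hIm : oIm (oR p + q • omul ol ok) = -(q • okl) := by
    rw [heigen, oIm_oR_sub_smul_okl]
  refine ⟨mvec_example3 p q, heigen, hassoc, hIm, fun hq r => ?_⟩
  rw [hIm, hassoc, smul_smul]
  exact neg_smul_okl_ne_smul_ol_sub_ok hq _
end
end
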